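/- Let A, B be strictly positive bounded operators on a complex Hilbert space with A ≤ B and m·1 ≤ B ≤ M·1 for scalars 0 < m < M, and let p ≤ 0, q ≤ 0, α > 0. Then B^p ≤ α·A^q + β·1, where β = α(q-1)·((M^p - m^p)/(αq(M-m)))^(q/(q-1)) + (M m^p - m M^p)/(M-m) when m ≤ ((M^p - m^p)/(αq(M-m)))^(1/(q-1)) ≤ M, and β = max{ m^p - α m^q, M^p - α M^q } otherwise. -/

import Mathlib

/-!
Mond–Pečarić method. It suffices to compare the two sides in every vector state `φ`. On
`[m, M]` the convex function `t ↦ t ^ p` lies below its chord `k t + c`, with slope `k ≤ 0`,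
so `φ (B ^ p) ≤ k φ B + c`; the tangent line of `t ↦ t ^ q` at `φ A` gives Jensen's inequality
`(φ A) ^ q ≤ φ (A ^ q)`. As `φ A ≤ φ B` and `k ≤ 0`, it remains to see that `β` bounds the
concave function `t ↦ k t + c - α t ^ q` on `[m, M]`: it is its value at the critical point when
that lies in `[m, M]`, and its value at an endpoint otherwise.
-/

open Real Set
open scoped InnerProductSpace

lemma one_add_mul_sub_le_rpow_of_nonpos {q u : ℝ} (hq : q ≤ 0) (hu : 0 < u) :
    1 + q * (u - 1) ≤ u ^ q := by
  have h := one_add_mul_self_le_rpow_one_add (s := u⁻¹ - 1)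
    (by linarith [inv_pos.2 hu]) (p := 1 - q) (by linarith)
  rw [add_sub_cancel, inv_rpow hu.le, ← rpow_neg hu.le, neg_sub] at h
  calc 1 + q * (u - 1) = u * (1 + (1 - q) * (u⁻¹ - 1)) := by field_simp; ring
    _ ≤ u * u ^ (q - 1) := by gcongr
    _ = u ^ q := by rw [rpow_sub hu, rpow_one]; field_simp

lemma rpow_add_mul_sub_le_rpow {q a t : ℝ} (hq : q ≤ 0) (ha : 0 < a) (ht : 0 < t) :
    a ^ q + q * a ^ (q - 1) * (t - a) ≤ t ^ q := by
  have h := one_add_mul_sub_le_rpow_of_nonpos hq (div_pos ht ha)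
  rw [div_rpow ht.le ha.le, le_div_iff₀ (rpow_pos_of_pos ha q)] at h
  calc a ^ q + q * a ^ (q - 1) * (t - a) = (1 + q * (t / a - 1)) * a ^ q := by
        rw [rpow_sub ha, rpow_one]; field_simp
    _ ≤ t ^ q := h

noncomputable def chordSlope (f : ℝ → ℝ) (m M : ℝ) : ℝ := (f M - f m) / (M - m)

noncomputable def chordIntercept (f : ℝ → ℝ) (m M : ℝ) : ℝ := (M * f m - m * f M) / (M - m)

lemma chordSlope_mul_add_chordIntercept (f : ℝ → ℝ) {m M : ℝ} (hmM : m ≠ M) (t : ℝ) :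
    chordSlope f m M * t + chordIntercept f m M
      = ((M - t) * f m + (t - m) * f M) / (M - m) := by
  rw [chordSlope, chordIntercept]
  field_simp
  ring

lemma chordSlope_mul_add_chordIntercept_left (f : ℝ → ℝ) {m M : ℝ} (hmM : m ≠ M) :
    chordSlope f m M * m + chordIntercept f m M = f m := by
  rw [chordSlope_mul_add_chordIntercept f hmM, sub_self, zero_mul, add_zero,
    mul_div_cancel_left₀ _ (sub_ne_zero.2 hmM.symm)]

lemma chordSlope_mul_add_chordIntercept_right (f : ℝ → ℝ) {m M : ℝ} (hmM : m ≠ M) :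
    chordSlope f m M * M + chordIntercept f m M = f M := by
  rw [chordSlope_mul_add_chordIntercept f hmM, sub_self, zero_mul, zero_add,
    mul_div_cancel_left₀ _ (sub_ne_zero.2 hmM.symm)]

lemma rpow_le_chord {p m M t : ℝ} (hp : p ≤ 0) (hm : 0 < m) (hmM : m < M)
    (htm : m ≤ t) (htM : t ≤ M) :
    t ^ p ≤ chordSlope (· ^ p) m M * t + chordIntercept (· ^ p) m M := by
  have ht : 0 < t := hm.trans_le htm
  have hm' := rpow_add_mul_sub_le_rpow hp ht hm
  have hM' := rpow_add_mul_sub_le_rpow hp ht (hm.trans hmM)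
  rw [chordSlope_mul_add_chordIntercept _ hmM.ne, le_div_iff₀ (by linarith)]
  nlinarith [mul_le_mul_of_nonneg_left hm' (by linarith : 0 ≤ M - t),
    mul_le_mul_of_nonneg_left hM' (by linarith : 0 ≤ t - m)]

lemma mul_sub_rpow_le_tangent {q α k s t : ℝ} (hq : q ≤ 0) (hα : 0 ≤ α) (hs : 0 < s)
    (ht : 0 < t) :
    k * t - α * t ^ q ≤ k * s - α * s ^ q + (k - α * q * s ^ (q - 1)) * (t - s) := by
  nlinarith [mul_le_mul_of_nonneg_left (rpow_add_mul_sub_le_rpow hq hs ht) hα]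

lemma chordSlope_rpow_nonpos {p m M : ℝ} (hp : p ≤ 0) (hm : 0 < m) (hmM : m ≤ M) :
    chordSlope (· ^ p) m M ≤ 0 :=
  div_nonpos_of_nonpos_of_nonneg (sub_nonpos.2 (rpow_le_rpow_of_nonpos hm hmM hp))
    (sub_nonneg.2 hmM)

noncomputable def mondPecaricConst (m M p q α : ℝ) : ℝ :=
  if ((M ^ p - m ^ p) / (α * q * (M - m))) ^ (1 / (q - 1)) ∈ Icc m M then
    α * (q - 1) * ((M ^ p - m ^ p) / (α * q * (M - m))) ^ (q / (q - 1)) +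
      (M * m ^ p - m * M ^ p) / (M - m)
  else
    max (m ^ p - α * m ^ q) (M ^ p - α * M ^ q)

section MondPecaric

variable {m M p q α : ℝ} (hm : 0 < m) (hmM : m < M) (hp : p ≤ 0) (hq : q ≤ 0) (hα : 0 < α)
include hm hmM hp hq hα

lemma chordSlope_mul_sub_rpow_le_of_mem_Icc
    (hT : ((M ^ p - m ^ p) / (α * q * (M - m))) ^ (1 / (q - 1)) ∈ Icc m M) {t : ℝ}
    (ht : 0 < t) :
    chordSlope (· ^ p) m M * t - α * t ^ q ≤
      α * (q - 1) * ((M ^ p - m ^ p) / (α * q * (M - m))) ^ (q / (q - 1)) := by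
  set K := (M ^ p - m ^ p) / (α * q * (M - m)) with hK_def
  set T := K ^ (1 / (q - 1)) with hT_def
  have hq1 : q - 1 ≠ 0 := by linarith
  -- `T` is the critical point of the concave function `t ↦ k t - α t ^ q`
  have hT0 : 0 < T := hm.trans_le hT.1
  have hK0 : K ≠ 0 := by
    rintro hK
    rw [hT_def, hK, zero_rpow (one_div_ne_zero hq1)] at hT0
    exact hT0.false
  have hq0 : q ≠ 0 := by
    rintro rfl
    simp [hK_def] at hK0
  have hK_nonneg : 0 ≤ K :=
    div_nonneg_of_nonpos (sub_nonpos.2 (rpow_le_rpow_of_nonpos hm hmM.le hp))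
      (mul_nonpos_of_nonpos_of_nonneg (mul_nonpos_of_nonneg_of_nonpos hα.le hq) (by linarith))
  have hslope : chordSlope (· ^ p) m M = α * q * T ^ (q - 1) := by
    rw [hT_def, ← rpow_mul hK_nonneg, one_div_mul_cancel hq1, rpow_one, hK_def, chordSlope]
    field_simp
  have hTq : T ^ q = K ^ (q / (q - 1)) := by
    rw [hT_def, ← rpow_mul hK_nonneg]
    congr 1
    field_simp
  calc chordSlope (· ^ p) m M * t - α * t ^ q
      ≤ chordSlope (· ^ p) m M * T - α * T ^ q
          + (chordSlope (· ^ p) m M - α * q * T ^ (q - 1)) * (t - T) :=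
        mul_sub_rpow_le_tangent hq hα.le hT0 ht
    _ = α * (q - 1) * T ^ q := by
        rw [hslope, rpow_sub_one hT0.ne']
        field_simp
        ring
    _ = α * (q - 1) * K ^ (q / (q - 1)) := by rw [hTq]

lemma chord_sub_rpow_le_max_of_notMem_Icc
    (hT : ((M ^ p - m ^ p) / (α * q * (M - m))) ^ (1 / (q - 1)) ∉ Icc m M) {t : ℝ}
    (htm : m ≤ t) (htM : t ≤ M) :
    chordSlope (· ^ p) m M * t + chordIntercept (· ^ p) m M - α * t ^ q ≤
      max (m ^ p - α * m ^ q) (M ^ p - α * M ^ q) := by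
  set k := chordSlope (· ^ p) m M
  have hM : 0 < M := hm.trans hmM
  have ht : 0 < t := hm.trans_le htm
  have hq1 : q - 1 < 0 := by linarith
  -- The derivative `s ↦ k - α q s ^ (q - 1)` of the concave function `s ↦ k s - α s ^ q`
  -- could only change sign on `[m, M]` by vanishing there, i.e. at the point excluded by `hT`.
  have hmono : k - α * q * m ^ (q - 1) ≤ 0 ∨ 0 ≤ k - α * q * M ^ (q - 1) := by
    by_contra! ⟨hm', hM'⟩
    have hmq := rpow_pos_of_pos hm (q - 1)
    have hMq := rpow_pos_of_pos hM (q - 1)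
    have hk := chordSlope_rpow_nonpos hp hm hmM.le
    have hαq : α * q < 0 := by nlinarith
    have hK : (M ^ p - m ^ p) / (α * q * (M - m)) = k / (α * q) := by
      simp only [k, chordSlope]
      rw [div_div, mul_comm (M - m)]
    have hKm : k / (α * q) ≤ m ^ (q - 1) := by
      rw [div_le_iff_of_neg hαq]
      linarith
    have hMK : M ^ (q - 1) ≤ k / (α * q) := by
      rw [le_div_iff_of_neg hαq]
      linarith
    rw [hK] at hT
    refine hT ⟨?_, ?_⟩
    · rw [← rpow_rpow_inv hm.le hq1.ne, ← one_div]
      exact rpow_le_rpow_of_nonpos (hMq.trans_le hMK) hKm (by simp [hq1.le])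
    · rw [← rpow_rpow_inv hM.le hq1.ne, ← one_div]
      exact rpow_le_rpow_of_nonpos hMq hMK (by simp [hq1.le])
  rcases hmono with hm' | hM'
  · have := mul_sub_rpow_le_tangent (k := k) hq hα.le hm ht
    have hchord := chordSlope_mul_add_chordIntercept_left (· ^ p) hmM.ne
    nlinarith [le_max_left (m ^ p - α * m ^ q) (M ^ p - α * M ^ q)]
  · have := mul_sub_rpow_le_tangent (k := k) hq hα.le hM ht
    have hchord := chordSlope_mul_add_chordIntercept_right (· ^ p) hmM.ne
    nlinarith [le_max_right (m ^ p - α * m ^ q) (M ^ p - α * M ^ q)]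

lemma chord_sub_rpow_le_mondPecaricConst {t : ℝ} (htm : m ≤ t) (htM : t ≤ M) :
    chordSlope (· ^ p) m M * t + chordIntercept (· ^ p) m M - α * t ^ q ≤
      mondPecaricConst m M p q α := by
  unfold mondPecaricConst
  split_ifs with hT
  · have := chordSlope_mul_sub_rpow_le_of_mem_Icc hm hmM hp hq hα hT (hm.trans_le htm)
    simp only [chordIntercept]
    linarith
  · exact chord_sub_rpow_le_max_of_notMem_Icc hm hmM hp hq hα hT htm htM

lemma chord_le_mul_rpow_add_mondPecaricConst {a b : ℝ} (ha : 0 < a) (hab : a ≤ b)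
    (hmb : m ≤ b) (hbM : b ≤ M) :
    chordSlope (· ^ p) m M * b + chordIntercept (· ^ p) m M ≤
      α * a ^ q + mondPecaricConst m M p q α := by
  have hk := chordSlope_rpow_nonpos hp hm hmM.le
  rcases le_total m a with hma | ham
  · have := chord_sub_rpow_le_mondPecaricConst hm hmM hp hq hα hma (hab.trans hbM)
    nlinarith [mul_le_mul_of_nonpos_left hab hk]
  · have := chord_sub_rpow_le_mondPecaricConst hm hmM hp hq hα le_rfl hmM.le
    nlinarith [mul_le_mul_of_nonpos_left hmb hk, rpow_le_rpow_of_nonpos ha ham hq]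

end MondPecaric

lemma PositiveLinearMap.map_algebraMap_of_map_one {A : Type*} [Ring A] [PartialOrder A]
    [Algebra ℝ A] (φ : A →ₚ[ℝ] ℝ) (hφ : φ 1 = 1) (c : ℝ) : φ (algebraMap ℝ A c) = c := by
  rw [Algebra.algebraMap_eq_smul_one, map_smul, hφ, smul_eq_mul, mul_one]

section CStarAlgebra

variable {A : Type*} [CStarAlgebra A] [PartialOrder A] [StarOrderedRing A]

lemma cfc_le_smul_add_algebraMap {a : A} (ha : IsSelfAdjoint a) {f : ℝ → ℝ} {k c : ℝ}
    (hf : ContinuousOn f (spectrum ℝ a)) (h : ∀ t ∈ spectrum ℝ a, f t ≤ k * t + c) :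
    cfc f a ≤ k • a + algebraMap ℝ A c := by
  calc cfc f a ≤ cfc (fun t => k * t + c) a := cfc_mono h hf
    _ = k • a + algebraMap ℝ A c := by
      rw [cfc_add .., cfc_const_mul .., cfc_id' .., cfc_const ..]

lemma smul_add_algebraMap_le_cfc {a : A} (ha : IsSelfAdjoint a) {f : ℝ → ℝ} {k c : ℝ}
    (hf : ContinuousOn f (spectrum ℝ a)) (h : ∀ t ∈ spectrum ℝ a, k * t + c ≤ f t) :
    k • a + algebraMap ℝ A c ≤ cfc f a := by
  calc k • a + algebraMap ℝ A c = cfc (fun t => k * t + c) a := by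
        rw [cfc_add .., cfc_const_mul .., cfc_id' .., cfc_const ..]
    _ ≤ cfc f a := cfc_mono h (hf := by fun_prop) hf

variable (φ : A →ₚ[ℝ] ℝ) (hφ : φ 1 = 1)
include hφ

lemma PositiveLinearMap.map_pos_of_isStrictlyPositive {a : A} (ha : IsStrictlyPositive a) :
    0 < φ a := by
  have : Nontrivial A := ⟨⟨1, 0, fun h => by simp [h] at hφ⟩⟩
  obtain ⟨r, hr, hra⟩ := (CFC.exists_pos_algebraMap_le_iff ha.isSelfAdjoint).2
    fun t ht => ha.spectrum_pos ht
  calc 0 < r := hr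
    _ = φ (algebraMap ℝ A r) := (φ.map_algebraMap_of_map_one hφ r).symm
    _ ≤ φ a := OrderHomClass.mono φ hra

lemma PositiveLinearMap.map_cfc_rpow_le_chord {m M p : ℝ} (hm : 0 < m) (hmM : m < M)
    (hp : p ≤ 0) {b : A} (hmb : algebraMap ℝ A m ≤ b) (hbM : b ≤ algebraMap ℝ A M) :
    φ (cfc (fun t : ℝ => t ^ p) b) ≤
      chordSlope (· ^ p) m M * φ b + chordIntercept (· ^ p) m M := by
  have hb : IsSelfAdjoint b := .of_nonneg ((isStrictlyPositive_algebraMap hm).nonneg.trans hmb)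
  have hspec (t : ℝ) (ht : t ∈ spectrum ℝ b) : m ≤ t ∧ t ≤ M :=
    ⟨(algebraMap_le_iff_le_spectrum hb).1 hmb t ht, (le_algebraMap_iff_spectrum_le hb).1 hbM t ht⟩
  have hchord := cfc_le_smul_add_algebraMap hb (f := fun t : ℝ => t ^ p)
    (continuousOn_id.rpow_const fun t ht => .inl (hm.trans_le (hspec t ht).1).ne')
    fun t ht => rpow_le_chord hp hm hmM (hspec t ht).1 (hspec t ht).2
  calc φ (cfc (fun t : ℝ => t ^ p) b)
      ≤ φ (chordSlope (· ^ p) m M • b + algebraMap ℝ A (chordIntercept (· ^ p) m M)) :=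
        OrderHomClass.mono φ hchord
    _ = chordSlope (· ^ p) m M * φ b + chordIntercept (· ^ p) m M := by
        rw [map_add, map_smul, φ.map_algebraMap_of_map_one hφ, smul_eq_mul]

lemma PositiveLinearMap.rpow_map_le_map_cfc_rpow {q : ℝ} (hq : q ≤ 0) {a : A}
    (ha : IsStrictlyPositive a) :
    φ a ^ q ≤ φ (cfc (fun t : ℝ => t ^ q) a) := by
  set s := φ a
  have hs : 0 < s := φ.map_pos_of_isStrictlyPositive hφ ha
  -- the tangent line of `t ↦ t ^ q` at `s = φ a` lies below it on the spectrum of `a`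
  have htangent := smul_add_algebraMap_le_cfc ha.isSelfAdjoint (f := fun t : ℝ => t ^ q)
    (continuousOn_id.rpow_const fun t ht => .inl (ha.spectrum_pos ht).ne')
    (k := q * s ^ (q - 1)) (c := s ^ q - q * s ^ (q - 1) * s)
    fun t ht => by linarith [rpow_add_mul_sub_le_rpow hq hs (ha.spectrum_pos ht)]
  calc s ^ q = φ ((q * s ^ (q - 1)) • a + algebraMap ℝ A (s ^ q - q * s ^ (q - 1) * s)) := by
        rw [map_add, map_smul, φ.map_algebraMap_of_map_one hφ, smul_eq_mul]
        ring
    _ ≤ φ (cfc (fun t : ℝ => t ^ q) a) := OrderHomClass.mono φ htangent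

theorem PositiveLinearMap.map_cfc_rpow_le_mondPecaricConst {m M p q α : ℝ} (hm : 0 < m)
    (hmM : m < M) (hp : p ≤ 0) (hq : q ≤ 0) (hα : 0 < α) {a b : A}
    (ha : IsStrictlyPositive a) (hab : a ≤ b) (hmb : algebraMap ℝ A m ≤ b)
    (hbM : b ≤ algebraMap ℝ A M) :
    φ (cfc (fun t : ℝ => t ^ p) b) ≤
      α * φ (cfc (fun t : ℝ => t ^ q) a) + mondPecaricConst m M p q α := by
  have hmb' : m ≤ φ b := φ.map_algebraMap_of_map_one hφ m ▸ OrderHomClass.mono φ hmb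
  have hbM' : φ b ≤ M := φ.map_algebraMap_of_map_one hφ M ▸ OrderHomClass.mono φ hbM
  calc φ (cfc (fun t : ℝ => t ^ p) b)
      ≤ chordSlope (· ^ p) m M * φ b + chordIntercept (· ^ p) m M :=
        φ.map_cfc_rpow_le_chord hφ hm hmM hp hmb hbM
    _ ≤ α * φ a ^ q + mondPecaricConst m M p q α :=
        chord_le_mul_rpow_add_mondPecaricConst hm hmM hp hq hα
          (φ.map_pos_of_isStrictlyPositive hφ ha) (OrderHomClass.mono φ hab) hmb' hbM'
    _ ≤ α * φ (cfc (fun t : ℝ => t ^ q) a) + mondPecaricConst m M p q α := by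
        gcongr
        exact φ.rpow_map_le_map_cfc_rpow hφ hq ha

end CStarAlgebra

namespace ContinuousLinearMap

variable {𝕜 E : Type*} [RCLike 𝕜] [NormedAddCommGroup E] [InnerProductSpace 𝕜 E]

lemma reApplyInnerSelf_sub (S T : E →L[𝕜] E) (x : E) :
    (S - T).reApplyInnerSelf x = S.reApplyInnerSelf x - T.reApplyInnerSelf x := by
  simp [reApplyInnerSelf_apply, inner_sub_left]

variable [CompleteSpace E]

lemma le_of_forall_norm_eq_one_reApplyInnerSelf_le {S T : E →L[𝕜] E} (hS : IsSelfAdjoint S)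
    (hT : IsSelfAdjoint T)
    (h : ∀ u : E, ‖u‖ = 1 → S.reApplyInnerSelf u ≤ T.reApplyInnerSelf u) : S ≤ T := by
  rw [le_def, isPositive_def']
  refine ⟨hT.sub hS, fun x => ?_⟩
  rcases eq_or_ne x 0 with rfl | hx
  · simp [reApplyInnerSelf_apply]
  set u := (‖x‖⁻¹ : 𝕜) • x
  have hu : ‖u‖ = 1 := by simp [u, norm_smul, hx]
  have hxu : x = (‖x‖ : 𝕜) • u := by simp [u, smul_smul, hx]
  rw [hxu, reApplyInnerSelf_smul, reApplyInnerSelf_sub]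
  exact mul_nonneg (by positivity) (sub_nonneg.2 (h u hu))

section Complex

variable {H : Type*} [NormedAddCommGroup H] [InnerProductSpace ℂ H] [CompleteSpace H]

noncomputable def reApplyInnerSelfPositiveLinearMap (x : H) : (H →L[ℂ] H) →ₚ[ℝ] ℝ :=
  PositiveLinearMap.mk₀
    { toFun := fun T => T.reApplyInnerSelf x
      map_add' := fun S T => by simp [reApplyInnerSelf_apply, inner_add_left]
      map_smul' := fun r T => by
        rw [RingHom.id_apply, reApplyInnerSelf_apply, reApplyInnerSelf_apply, _root_.smul_apply,
          RCLike.real_smul_eq_coe_smul (K := ℂ), inner_smul_real_left]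
        simp }
    fun T hT => ((nonneg_iff_isPositive T).1 hT).re_inner_nonneg_left x

lemma reApplyInnerSelfPositiveLinearMap_one {x : H} (hx : ‖x‖ = 1) :
    reApplyInnerSelfPositiveLinearMap x (1 : H →L[ℂ] H) = 1 := by
  change RCLike.re ⟪(1 : H →L[ℂ] H) x, x⟫_ℂ = 1
  simp [hx]

end Complex

end ContinuousLinearMap

theorem stmt_4 {H : Type*} [NormedAddCommGroup H] [InnerProductSpace ℂ H] [CompleteSpace H]
    (A B : H →L[ℂ] H) (hA0 : 0 ≤ A) (hAu : IsUnit A)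
    (m M : ℝ) (hm : 0 < m) (hmM : m < M)
    (hAB : A ≤ B) (hmB : m • (1 : H →L[ℂ] H) ≤ B) (hBM : B ≤ M • (1 : H →L[ℂ] H))
    (p q : ℝ) (hp : p ≤ 0) (hq : q ≤ 0) (α : ℝ) (hα : 0 < α) (β : ℝ)
    (hβ : β =
      if ((M ^ p - m ^ p) / (α * q * (M - m))) ^ (1 / (q - 1)) ∈ Set.Icc m M then
        α * (q - 1) * ((M ^ p - m ^ p) / (α * q * (M - m))) ^ (q / (q - 1)) +
          (M * m ^ p - m * M ^ p) / (M - m)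
      else
        max (m ^ p - α * m ^ q) (M ^ p - α * M ^ q)) :
    cfc (fun t : ℝ => t ^ p) B ≤ α • cfc (fun t : ℝ => t ^ q) A + β • (1 : H →L[ℂ] H) := by
  subst hβ
  rw [← Algebra.algebraMap_eq_smul_one] at hmB hBM ⊢
  refine ContinuousLinearMap.le_of_forall_norm_eq_one_reApplyInnerSelf_le (cfc_predicate _ _)
    ((IsSelfAdjoint.all α).smul (cfc_predicate _ _) |>.add (.algebraMap _ (.all _)))
    fun u hu => ?_
  let φ := ContinuousLinearMap.reApplyInnerSelfPositiveLinearMap u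
  have hφ : φ 1 = 1 := ContinuousLinearMap.reApplyInnerSelfPositiveLinearMap_one hu
  change φ _ ≤ φ _
  rw [map_add, map_smul, φ.map_algebraMap_of_map_one hφ, smul_eq_mul]
  exact φ.map_cfc_rpow_le_mondPecaricConst hφ hm hmM hp hq hα ⟨hA0, hAu⟩ hAB hmB hBM
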